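/- arXiv:1103.0510 — 5 statements merged into one kernel-verified Lean document; each statement's English description precedes it below -/
import Mathlib

section
/- Soundness of rule ▷⇒ (the later modality distributes over implication): if P, Q : ℕ → Prop are downward-closed, then for every n, (▷(P ⇛ Q)) n holds if and only if ((▷P) ⇛ (▷Q)) n holds. -/
def later (P : ℕ → Prop) : ℕ → Prop := fun n => ∀ k < n, P k

def kimp (P Q : ℕ → Prop) : ℕ → Prop := fun n => ∀ k ≤ n, P k → Q k

def DownClosed (P : ℕ → Prop) : Prop := ∀ m n, m ≤ n → P n → P m

theorem DownClosed.later_succ {P : ℕ → Prop} (hP : DownClosed P) {i : ℕ} (hi : P i) :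
    later P (i + 1) :=
  fun k hk => hP k i (Nat.lt_succ_iff.mp hk) hi

theorem kimp_later_of_later_kimp {P Q : ℕ → Prop} {n : ℕ} (h : later (kimp P Q) n) :
    kimp (later P) (later Q) n :=
  fun _ hk hPk j hj => h j (hj.trans_le hk) j le_rfl (hPk j hj)

/-- Downward closure turns `P i` into `▷P` at the world `i + 1 ≤ n`, where `▷Q` contains `Q i`. -/
theorem later_kimp_of_kimp_later {P Q : ℕ → Prop} (hP : DownClosed P) {n : ℕ}
    (h : kimp (later P) (later Q) n) : later (kimp P Q) n :=
  fun _ hm i hi hPi => h (i + 1) (hi.trans_lt hm) (hP.later_succ hPi) i i.lt_succ_self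

theorem later_kimp_sound_general (P Q : ℕ → Prop)
    (hP : DownClosed P) :
    ∀ n, later (kimp P Q) n ↔ kimp (later P) (later Q) n :=
  fun _ => ⟨kimp_later_of_later_kimp, later_kimp_of_kimp_later hP⟩

/-- Soundness of rule ▷⇒: the later modality distributes over
(Kripke) implication, given monotonicity. -/
theorem later_kimp_sound (P Q : ℕ → Prop)
    (hP : DownClosed P) (hQ : DownClosed Q) :
    ∀ n, later (kimp P Q) n ↔ kimp (later P) (later Q) n :=
  later_kimp_sound_general P Q hP
end

section
/- Soundness of rule ▷∨ (the later modality distributes over disjunction): if P, Q : ℕ → Prop are downward-closed, then for every n, (▷(fun k => P k ∨ Q k)) n holds if and only if (▷P) n ∨ (▷Q) n holds. -/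
theorem later_zero (P : ℕ → Prop) : later P 0 :=
  fun _ hk => absurd hk (Nat.not_lt_zero _)

theorem DownClosed.later_succ_iff {P : ℕ → Prop} (hP : DownClosed P) (n : ℕ) :
    later P (n + 1) ↔ P n :=
  ⟨fun h => h n n.lt_succ_self, fun h k hk => hP k n (Nat.lt_succ_iff.mp hk) h⟩

theorem DownClosed.or {P Q : ℕ → Prop} (hP : DownClosed P) (hQ : DownClosed Q) :
    DownClosed (fun k => P k ∨ Q k) :=
  fun m n hmn => Or.imp (hP m n hmn) (hQ m n hmn)

/-- Soundness of rule ▷∨: the later modality distributes over disjunction,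
given monotonicity. -/
theorem later_or_sound (P Q : ℕ → Prop)
    (hP : DownClosed P) (hQ : DownClosed Q) :
    ∀ n, later (fun k => P k ∨ Q k) n ↔ (later P n ∨ later Q n) := by
  rintro (_ | n)
  · exact iff_of_true (later_zero _) (Or.inl (later_zero P))
  · rw [(hP.or hQ).later_succ_iff, hP.later_succ_iff, hQ.later_succ_iff]
end

section
/- Soundness of rule ▷∃ (corrected with an inhabitedness side condition): for every nonempty type ι and every family P : ι → ℕ → Prop such that each P i is downward-closed, and every n, (▷(fun k => ∃ i, P i k)) n holds if and only if ∃ i, (▷(P i)) n holds. -/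
theorem DownClosed.exists {ι : Sort*} {P : ι → ℕ → Prop} (hP : ∀ i, DownClosed (P i)) :
    DownClosed fun k => ∃ i, P i k :=
  fun m n hmn ⟨i, hi⟩ => ⟨i, hP i m n hmn hi⟩

/-- Soundness of the corrected rule ▷∃: the later modality distributes over
existential quantification over a nonempty domain of downward-closed
predicates. -/
theorem later_exists_sound {ι : Type*} [Nonempty ι] (P : ι → ℕ → Prop)
    (hP : ∀ i, DownClosed (P i)) :
    ∀ n, later (fun k => ∃ i, P i k) n ↔ (∃ i, later (P i) n) := by
  rintro (_ | n)
  · exact iff_of_true (later_zero _) ⟨Classical.arbitrary ι, later_zero _⟩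
  · rw [(DownClosed.exists hP).later_succ_iff]
    exact exists_congr fun i => ((hP i).later_succ_iff n).symm
end

section
/- For a world-independent (first-order) proposition, 'later' implies 'now' at every world except world 1: let c : Prop and define P : ℕ → Prop by P n := (n = 0 ∨ c), the model interpretation of a first-order proposition that is true in the trivial world 0 and whose truth elsewhere is given by c. Then for every n ≠ 1, (▷P) n implies P n; moreover (▷P) 1 always holds, so if ¬c then (▷P) 1 holds while P 1 fails. -/
theorem later_one_iff (P : ℕ → Prop) : later P 1 ↔ P 0 :=
  ⟨fun h => h 0 Nat.zero_lt_one, fun h0 _ hk => Nat.lt_one_iff.1 hk ▸ h0⟩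

theorem eq_zero_or_of_later {c : Prop} {n : ℕ} (hn : n ≠ 1)
    (h : later (fun n => n = 0 ∨ c) n) : n = 0 ∨ c := by
  rcases n with _ | _ | m
  · exact Or.inl rfl
  · exact absurd rfl hn
  · exact Or.inr ((h 1 (by omega)).resolve_left one_ne_zero)

/-- For a world-independent (first-order) proposition `c`, interpreted as
`P n := (n = 0 ∨ c)`, 'later' implies 'now' at every world except world 1;
`▷P` always holds at world 1, so if `¬c` then `▷P 1` holds while `P 1` fails. -/
theorem later_implies_now_except_world_one (c : Prop) :
    (∀ n, n ≠ 1 → later (fun n => n = 0 ∨ c) n → (n = 0 ∨ c)) ∧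
    later (fun n => n = 0 ∨ c) 1 ∧
    (¬c → later (fun n => n = 0 ∨ c) 1 ∧ ¬ ((1 : ℕ) = 0 ∨ c)) := by
  have later_one : later (fun n => n = 0 ∨ c) 1 := (later_one_iff _).2 (Or.inl rfl)
  exact ⟨fun _ hn h => eq_zero_or_of_later hn h, later_one,
    fun hc => ⟨later_one, fun h => h.elim one_ne_zero hc⟩⟩
end

section
/- Well-definedness of recursive relations μr.R: let F : (ℕ → Prop) → (ℕ → Prop) be contractive, meaning that for all P, Q : ℕ → Prop and all n, if P k ↔ Q k for every k < n, then F P n ↔ F Q n. Then there exists a predicate P : ℕ → Prop with P n ↔ F P n for all n, and this fixed point is unique: any Q : ℕ → Prop with Q n ↔ F Q n for all n satisfies Q n ↔ P n for all n. -/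
/-! Contractiveness makes the values of `F f` at `x` depend only on the values of `f` strictly
below `x`, so a fixed point can be built by well-founded recursion (extending the values already
built in an arbitrary way), and two fixed points agree everywhere by well-founded induction.
Over `Prop`, worldwise `↔` is equality by propositional extensionality. -/

open Function

section Contractive

variable {ι α : Type*} (r : ι → ι → Prop)

def IsContractive (F : (ι → α) → ι → α) : Prop :=
  ∀ f g x, (∀ y, r y x → f y = g y) → F f x = F g x

variable {r} {F : (ι → α) → ι → α}

theorem IsContractive.eq_of_isFixedPt (hr : WellFounded r) (hF : IsContractive r F)
    {f g : ι → α} (hf : IsFixedPt F f) (hg : IsFixedPt F g) : f = g := by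
  funext x
  induction x using hr.induction with
  | _ x ih =>
    calc f x = F f x := (congrFun hf x).symm
      _ = F g x := hF f g x ih
      _ = g x := congrFun hg x

open Classical in
noncomputable def WellFounded.contractiveFix (hr : WellFounded r) [Nonempty α]
    (F : (ι → α) → ι → α) : ι → α :=
  hr.fix fun x f => F (fun y => if h : r y x then f y h else Classical.arbitrary α) x

theorem WellFounded.isFixedPt_contractiveFix (hr : WellFounded r) [Nonempty α]
    (hF : IsContractive r F) : IsFixedPt F (hr.contractiveFix F) := by
  funext x
  rw [contractiveFix, hr.fix_eq]
  exact hF _ _ x fun y hy => by simp only [hy, dite_true]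

end Contractive

/-- Well-definedness of recursive relations μr.R: a contractive operator on
world-indexed predicates has a fixed point, unique up to worldwise
equivalence. -/
theorem contractive_fixed_point
    (F : (ℕ → Prop) → (ℕ → Prop))
    (hF : ∀ P Q : ℕ → Prop, ∀ n, (∀ k < n, (P k ↔ Q k)) → (F P n ↔ F Q n)) :
    ∃ P : ℕ → Prop, (∀ n, P n ↔ F P n) ∧
      ∀ Q : ℕ → Prop, (∀ n, Q n ↔ F Q n) → ∀ n, Q n ↔ P n := by
  have hwf : WellFounded (· < · : ℕ → ℕ → Prop) := wellFounded_lt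
  have hFc : IsContractive (· < ·) F := fun P Q n h =>
    propext (hF P Q n fun k hk => Iff.of_eq (h k hk))
  have hfix := hwf.isFixedPt_contractiveFix hFc
  refine ⟨hwf.contractiveFix F, fun n => Iff.of_eq (congrFun hfix n).symm, fun Q hQ n => ?_⟩
  have hQfix : IsFixedPt F Q := funext fun n => propext (hQ n).symm
  exact Iff.of_eq (congrFun (hFc.eq_of_isFixedPt hwf hQfix hfix) n)
end
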